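/- arXiv:2105.11235 — 4 statements merged into one kernel-verified Lean document; each statement's English description precedes it below -/
import Mathlib

section
/- Let G be a graph with a cutvertex v, let C be the vertex set of a connected component of G − v, let G₁ = G[C ∪ {v}] and G₂ = G − C. If both G₁ and G₂ admit distance-2 colorings with k colors, where k ≥ deg_{G₁}(v) + deg_{G₂}(v) + 1, then G admits a distance-2 coloring with k colors. -/
/-!
Colour `G₁ = G[C ∪ {v}]` and `G₂ = G - C` separately. Two vertices at distance at most 2 in `G`
on different sides of the cut are both neighbours of `v`, so the two colourings glue as soon as
they agree at `v` and the colours on `N_{G₁}(v)` avoid those on `N_{G₂}[v]`. The colours on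
`N_{G₁}(v)` already differ from the colour of `v`, so with at least
`deg_{G₁}(v) + deg_{G₂}(v) + 1` colours a permutation of the colours of `G₁` achieves both.
-/

def IsDist2Coloring {W : Type*} (H : SimpleGraph W) {k : ℕ} (c : W → Fin k) : Prop :=
  ∀ u w, u ≠ w → (H.Adj u w ∨ ∃ x, H.Adj u x ∧ H.Adj x w) → c u ≠ c w

section

open Finset Function

theorem Equiv.Perm.exists_apply_eq_and_apply_notMem {α : Type*} [Fintype α] [DecidableEq α]
    {A B : Finset α} {a b : α} (ha : a ∉ A) (hb : b ∉ B) (hcard : #A + #B + 1 ≤ Fintype.card α) :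
    ∃ σ : Perm α, σ a = b ∧ ∀ x ∈ A, σ x ∉ insert b B := by
  obtain ⟨T, hT, hTA⟩ : ∃ T ⊆ (insert b B)ᶜ, #T = #A := exists_subset_card_eq (by
    rw [card_compl, card_insert_of_notMem hb]; omega)
  let e : A ≃ T := A.equivOfCardEq hTA.symm
  have hbT : b ∉ T := fun h => by simpa using hT h
  obtain ⟨σ, hσ⟩ := exists_extending_pair (Option.elim' a Subtype.val)
    (Option.elim' b fun x => (e x : α))
    (Option.injective_iff.2 ⟨Subtype.val_injective, by simpa using ha⟩)
    (Option.injective_iff.2 ⟨Subtype.val_injective.comp e.injective,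
      by simpa using fun x hx (h : (e ⟨x, hx⟩ : α) = b) => hbT (h ▸ (e ⟨x, hx⟩).2)⟩)
  refine ⟨σ, hσ none, fun x hx => mem_compl.1 (hT ?_)⟩
  exact (hσ (some ⟨x, hx⟩)).symm ▸ (e ⟨x, hx⟩).2

variable {V α : Type*} (G : SimpleGraph V)

def IsDist2ColoringOn (s : Set V) (c : V → α) : Prop :=
  ∀ u ∈ s, ∀ w ∈ s, u ≠ w → (G.Adj u w ∨ ∃ x ∈ s, G.Adj u x ∧ G.Adj x w) → c u ≠ c w

variable {G}

theorem IsDist2ColoringOn.comp_injective {β : Type*} {s : Set V} {c : V → α} {f : α → β}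
    (hc : IsDist2ColoringOn G s c) (hf : Injective f) : IsDist2ColoringOn G s (f ∘ c) :=
  fun u hu w hw hne hd => hf.ne (hc u hu w hw hne hd)

theorem exists_isDist2ColoringOn_of_induce {k : ℕ} {s : Set V} (hs : s.Nonempty)
    (h : ∃ c : s → Fin k, IsDist2Coloring (G.induce s) c) :
    ∃ c : V → Fin k, IsDist2ColoringOn G s c := by
  obtain ⟨c, hc⟩ := h
  refine ⟨extend Subtype.val c fun _ => c ⟨_, hs.some_mem⟩, fun u hu w hw hne hd => ?_⟩
  rw [← Subtype.coe_mk u hu, ← Subtype.coe_mk w hw, Subtype.val_injective.extend_apply,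
    Subtype.val_injective.extend_apply]
  refine hc _ _ (by simpa using hne) ?_
  rcases hd with huw | ⟨x, hx, hux, hxw⟩
  · exact Or.inl huw
  · exact Or.inr ⟨⟨x, hx⟩, hux, hxw⟩

theorem isDist2Coloring_piecewise {k : ℕ} {C : Set V} [DecidablePred (· ∈ C)] {v : V}
    (hvC : v ∉ C) (hclosed : ∀ u ∈ C, ∀ w, G.Adj u w → w = v ∨ w ∈ C) {c₁ c₂ : V → Fin k}
    (hc₁ : IsDist2ColoringOn G (C ∪ {v}) c₁) (hc₂ : IsDist2ColoringOn G Cᶜ c₂)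
    (hv : c₁ v = c₂ v) (hsep : ∀ u ∈ C, ∀ w ∉ C, G.Adj v u → G.Adj v w → c₁ u ≠ c₂ w) :
    IsDist2Coloring G (C.piecewise c₁ c₂) := by
  have hnbr : ∀ u ∈ C, ∀ x, G.Adj u x → x ∈ C ∪ {v} := fun u hu x hx =>
    (hclosed u hu x hx).symm
  have eq₁ : ∀ u ∈ C ∪ {v}, C.piecewise c₁ c₂ u = c₁ u := by
    rintro u (hu | rfl)
    · exact C.piecewise_eq_of_mem _ _ hu
    · exact (C.piecewise_eq_of_notMem _ _ hvC).trans hv.symm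
  have eq₂ : ∀ u ∉ C, C.piecewise c₁ c₂ u = c₂ u := fun u hu => C.piecewise_eq_of_notMem _ _ hu
  have cross : ∀ u ∈ C, ∀ w ∉ C ∪ {v}, (G.Adj u w ∨ ∃ x, G.Adj u x ∧ G.Adj x w) →
      C.piecewise c₁ c₂ u ≠ C.piecewise c₁ c₂ w := by
    rintro u hu w hw (huw | ⟨x, hux, hxw⟩)
    · exact absurd (hnbr u hu w huw) hw
    obtain rfl : x = v := (hclosed u hu x hux).resolve_right fun hx => hw (hnbr x hx w hxw)
    have hwC : w ∉ C := fun h => hw (Or.inl h)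
    rw [eq₁ u (Or.inl hu), eq₂ w hwC]
    exact hsep u hu w hwC hux.symm hxw
  intro u w hne hd
  by_cases hC : u ∈ C ∨ w ∈ C
  · by_cases hs : u ∈ C ∪ {v} ∧ w ∈ C ∪ {v}
    · rw [eq₁ u hs.1, eq₁ w hs.2]
      refine hc₁ u hs.1 w hs.2 hne (hd.imp_right fun ⟨x, hux, hxw⟩ => ⟨x, ?_, hux, hxw⟩)
      rcases hC with hu | hw
      exacts [hnbr u hu x hux, hnbr w hw x hxw.symm]
    · rcases hC with hu | hw
      · exact cross u hu w (fun hw => hs ⟨Or.inl hu, hw⟩) hd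
      · refine (cross w hw u (fun hu => hs ⟨hu, Or.inl hw⟩) ?_).symm
        exact hd.imp (·.symm) fun ⟨x, hux, hxw⟩ => ⟨x, hxw.symm, hux.symm⟩
  · rw [not_or] at hC
    rw [eq₂ u hC.1, eq₂ w hC.2]
    refine hc₂ u hC.1 w hC.2 hne
      (hd.imp_right fun ⟨x, hux, hxw⟩ => ⟨x, fun hx => hne ?_, hux, hxw⟩)
    exact ((hclosed x hx u hux.symm).resolve_right hC.1).trans
      ((hclosed x hx w hxw).resolve_right hC.2).symm

theorem exists_perm_eq_at_and_separates_neighbors {k : ℕ} {C : Set V} [DecidablePred (· ∈ C)]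
    {v : V} [Fintype V] [DecidableRel G.Adj] (hvC : v ∉ C) {c₁ c₂ : V → Fin k}
    (hc₁ : IsDist2ColoringOn G (C ∪ {v}) c₁) (hc₂ : IsDist2ColoringOn G Cᶜ c₂)
    (hk : #(univ.filter fun u => u ∈ C ∧ G.Adj v u) + #(univ.filter fun u => u ∉ C ∧ G.Adj v u)
      + 1 ≤ k) :
    ∃ σ : Equiv.Perm (Fin k), σ (c₁ v) = c₂ v ∧
      ∀ u ∈ C, ∀ w ∉ C, G.Adj v u → G.Adj v w → σ (c₁ u) ≠ c₂ w := by
  set N₁ := univ.filter fun u => u ∈ C ∧ G.Adj v u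
  set N₂ := univ.filter fun u => u ∉ C ∧ G.Adj v u
  have hv₁ : c₁ v ∉ N₁.image c₁ := by
    simp only [N₁, mem_image, mem_filter, mem_univ, true_and, not_exists, not_and, and_imp]
    exact fun u hu hvu => hc₁ u (Or.inl hu) v (Or.inr rfl) hvu.ne' (Or.inl hvu.symm)
  have hv₂ : c₂ v ∉ N₂.image c₂ := by
    simp only [N₂, mem_image, mem_filter, mem_univ, true_and, not_exists, not_and, and_imp]
    exact fun u hu hvu => hc₂ u hu v hvC hvu.ne' (Or.inl hvu.symm)
  have hcard : #(N₁.image c₁) + #(N₂.image c₂) + 1 ≤ Fintype.card (Fin k) := by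
    simpa using (add_le_add card_image_le card_image_le).trans_lt (Nat.lt_of_succ_le hk)
  obtain ⟨σ, hσv, hσ⟩ := Equiv.Perm.exists_apply_eq_and_apply_notMem hv₁ hv₂ hcard
  refine ⟨σ, hσv, fun u hu w hw hvu hvw h => hσ (c₁ u) ?_ ?_⟩
  · exact mem_image_of_mem _ (by simp [N₁, hu, hvu])
  · exact h ▸ mem_insert_of_mem (mem_image_of_mem _ (by simp [N₂, hw, hvw]))

end

theorem stmt4_general {V : Type*} [Fintype V] [DecidableEq V] (G : SimpleGraph V)
    [DecidableRel G.Adj] (v : V) (C : Finset V) (k : ℕ)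
    (hvC : v ∉ C)
    (hclosed : ∀ u ∈ C, ∀ w, G.Adj u w → w = v ∨ w ∈ C)
    (hk : (Finset.univ.filter (fun u => u ∈ C ∧ G.Adj v u)).card
        + (Finset.univ.filter (fun u => u ∉ C ∧ G.Adj v u)).card + 1 ≤ k)
    (h1 : ∃ c : ((C : Set V) ∪ {v} : Set V) → Fin k,
      IsDist2Coloring (G.induce ((C : Set V) ∪ {v})) c)
    (h2 : ∃ c : (((C : Set V)ᶜ : Set V)) → Fin k,
      IsDist2Coloring (G.induce ((C : Set V)ᶜ)) c) :
    ∃ c : V → Fin k, IsDist2Coloring G c := by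
  obtain ⟨c₁, hc₁⟩ := exists_isDist2ColoringOn_of_induce ⟨v, Or.inr rfl⟩ h1
  obtain ⟨c₂, hc₂⟩ := exists_isDist2ColoringOn_of_induce ⟨v, hvC⟩ h2
  obtain ⟨σ, hσv, hσ⟩ := exists_perm_eq_at_and_separates_neighbors hvC hc₁ hc₂ hk
  exact ⟨_, isDist2Coloring_piecewise hvC hclosed (hc₁.comp_injective σ.injective) hc₂ hσv hσ⟩

/-- If `v` is a cutvertex of `G`, `C` is the vertex set of a connected
component of `G - v`, `G₁ = G[C ∪ {v}]`, `G₂ = G - C`, and both `G₁` and `G₂`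
admit distance-2 colorings with `k` colors where
`k ≥ deg_{G₁}(v) + deg_{G₂}(v) + 1`, then `G` admits a distance-2 coloring
with `k` colors. -/
theorem stmt4 {V : Type*} [Fintype V] [DecidableEq V] (G : SimpleGraph V)
    [DecidableRel G.Adj] (v : V) (C : Finset V) (k : ℕ)
    (hvC : v ∉ C)
    (hconn : (G.induce (C : Set V)).Connected)
    (hclosed : ∀ u ∈ C, ∀ w, G.Adj u w → w = v ∨ w ∈ C)
    (hk : (Finset.univ.filter (fun u => u ∈ C ∧ G.Adj v u)).card
        + (Finset.univ.filter (fun u => u ∉ C ∧ G.Adj v u)).card + 1 ≤ k)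
    (h1 : ∃ c : ((C : Set V) ∪ {v} : Set V) → Fin k,
      IsDist2Coloring (G.induce ((C : Set V) ∪ {v})) c)
    (h2 : ∃ c : (((C : Set V)ᶜ : Set V)) → Fin k,
      IsDist2Coloring (G.induce ((C : Set V)ᶜ)) c) :
    ∃ c : V → Fin k, IsDist2Coloring G c :=
  stmt4_general G v C k hvC hclosed hk h1 h2
end

section
/- Let G be a graph admitting no distance-2 coloring with k colors, such that every graph G' with |V(G')| + |E(G')| < |V(G)| + |E(G)| and maximum degree at most Δ(G) admits a distance-2 coloring with k colors. If k ≥ 2Δ(G) + 1 then the minimum degree of G is at least 2. -/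
open Finset

namespace SimpleGraph

variable {V : Type*} (G : SimpleGraph V)

def Dist2Adj (u w : V) : Prop := G.Adj u w ∨ ∃ x, G.Adj u x ∧ G.Adj x w

variable {G}

theorem Dist2Adj.symm {u w : V} : G.Dist2Adj u w → G.Dist2Adj w u
  | .inl h => .inl h.symm
  | .inr ⟨x, hux, hxw⟩ => .inr ⟨x, hxw.symm, hux.symm⟩

theorem Dist2Adj.induce_compl_singleton [Fintype V] [DecidableRel G.Adj] {u v w : V}
    (hu : G.degree u ≤ 1) (hv : v ≠ u) (hw : w ≠ u) (hvw : v ≠ w) (h : G.Dist2Adj v w) :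
    (G.induce {u}ᶜ).Dist2Adj ⟨v, hv⟩ ⟨w, hw⟩ := by
  obtain h | ⟨x, hvx, hxw⟩ := h
  · exact .inl h
  · by_cases hx : x = u
    · subst hx
      exact absurd (card_le_one.mp hu v (by simpa using hvx.symm) w (by simpa using hxw)) hvw
    · exact .inr ⟨⟨x, hx⟩, hvx, hxw⟩

variable (G) [Fintype V] [DecidableEq V] [DecidableRel G.Adj]

theorem card_add_card_edgeFinset_induce_compl_singleton_lt (u : V) :
    Fintype.card ↥({u}ᶜ : Set V) + #(G.induce {u}ᶜ).edgeFinset <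
      Fintype.card V + #G.edgeFinset := by
  have hV : Fintype.card ↥({u}ᶜ : Set V) < Fintype.card V :=
    Fintype.card_subtype_lt (x := u) (by simp)
  have hE : #(G.induce {u}ᶜ).edgeFinset ≤ #G.edgeFinset := by
    rw [card_edgeFinset_induce_compl_singleton, card_edgeFinset_deleteIncidenceSet]
    exact Nat.sub_le _ _
  omega

def dist2NeighborFinset (u : V) : Finset V :=
  (G.neighborFinset u).biUnion fun x ↦ insert x ((G.neighborFinset x).erase u)

theorem mem_dist2NeighborFinset {u w : V} (hw : w ≠ u) (h : G.Dist2Adj u w) :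
    w ∈ G.dist2NeighborFinset u := by
  simp only [dist2NeighborFinset, mem_biUnion, mem_neighborFinset, mem_insert, mem_erase]
  obtain h | ⟨x, hux, hxw⟩ := h
  · exact ⟨w, h, .inl rfl⟩
  · exact ⟨x, hux, .inr ⟨hw, hxw⟩⟩

theorem card_dist2NeighborFinset_le (u : V) :
    #(G.dist2NeighborFinset u) ≤ G.degree u * G.maxDegree := by
  calc #(G.dist2NeighborFinset u)
      ≤ ∑ x ∈ G.neighborFinset u, #(insert x ((G.neighborFinset x).erase u)) :=
        card_biUnion_le
    _ ≤ ∑ _x ∈ G.neighborFinset u, G.maxDegree := by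
      refine sum_le_sum fun x hx ↦ ?_
      have hux : u ∈ G.neighborFinset x := by simpa [adj_comm] using hx
      calc #(insert x ((G.neighborFinset x).erase u))
          ≤ #((G.neighborFinset x).erase u) + 1 := card_insert_le _ _
        _ = G.degree x := by rw [card_erase_add_one hux, card_neighborFinset_eq_degree]
        _ ≤ G.maxDegree := G.degree_le_maxDegree x
    _ = G.degree u * G.maxDegree := by rw [sum_const, card_neighborFinset_eq_degree, smul_eq_mul]

theorem exists_color_ne_of_dist2Adj {k : ℕ} {u : V} (c : ({u}ᶜ : Set V) → Fin k)
    (hk : G.degree u * G.maxDegree < k) :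
    ∃ a, ∀ w (hw : w ≠ u), G.Dist2Adj u w → c ⟨w, hw⟩ ≠ a := by
  set used := ((G.dist2NeighborFinset u).subtype (· ∈ ({u}ᶜ : Set V))).image c
  have hused : #used < #(univ : Finset (Fin k)) :=
    calc #used ≤ #((G.dist2NeighborFinset u).subtype (· ∈ ({u}ᶜ : Set V))) := card_image_le
      _ ≤ #(G.dist2NeighborFinset u) := by rw [card_subtype]; exact card_filter_le _ _
      _ < #(univ : Finset (Fin k)) := by
        rw [card_univ, Fintype.card_fin]
        exact (G.card_dist2NeighborFinset_le u).trans_lt hk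
  obtain ⟨a, -, ha⟩ := exists_mem_notMem_of_card_lt_card hused
  refine ⟨a, fun w hw h hca ↦ ha ?_⟩
  rw [← hca]
  exact mem_image_of_mem c (mem_subtype.mpr (G.mem_dist2NeighborFinset hw h))

theorem isDist2Coloring_of_induce_compl_singleton {k : ℕ} {u : V} (hu : G.degree u ≤ 1)
    {c : ({u}ᶜ : Set V) → Fin k} (hc : IsDist2Coloring (G.induce {u}ᶜ) c) {a : Fin k}
    (ha : ∀ w (hw : w ≠ u), G.Dist2Adj u w → c ⟨w, hw⟩ ≠ a) :
    IsDist2Coloring G fun v ↦ if h : v = u then a else c ⟨v, h⟩ := by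
  intro v w hvw h
  by_cases hv : v = u <;> by_cases hw : w = u
  · exact absurd (hv.trans hw.symm) hvw
  · subst hv
    simpa [hw] using (ha w hw h).symm
  · subst hw
    simpa [hv] using ha v hv (Dist2Adj.symm h)
  · simpa [hv, hw] using hc ⟨v, hv⟩ ⟨w, hw⟩ (Subtype.coe_ne_coe.mp hvw)
      (Dist2Adj.induce_compl_singleton hu hv hw hvw h)

end SimpleGraph

/-- If `G` admits no distance-2 coloring with `k` colors, every graph `G'`
with `|V(G')| + |E(G')| < |V(G)| + |E(G)|` and maximum degree at most `Δ(G)`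
admits one, and `k ≥ 2Δ(G) + 1`, then the minimum degree of `G` is at
least 2. -/
theorem stmt5 {V : Type} [Fintype V] [DecidableEq V] (G : SimpleGraph V)
    [DecidableRel G.Adj] (k : ℕ)
    (hG : ¬ ∃ c : V → Fin k, IsDist2Coloring G c)
    (hmin : ∀ (W : Type) [Fintype W] [DecidableEq W] (H : SimpleGraph W),
      ∀ [DecidableRel H.Adj],
      Fintype.card W + H.edgeFinset.card < Fintype.card V + G.edgeFinset.card →
      H.maxDegree ≤ G.maxDegree →
      ∃ c : W → Fin k, IsDist2Coloring H c)
    (hk : 2 * G.maxDegree + 1 ≤ k) :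
    ∀ u : V, 2 ≤ G.degree u := by
  intro u
  by_contra! hdeg
  have hu : G.degree u ≤ 1 := by omega
  obtain ⟨c, hc⟩ := hmin _ (G.induce {u}ᶜ)
    (G.card_add_card_edgeFinset_induce_compl_singleton_lt u)
    (SimpleGraph.Embedding.induce _).toCopy.maxDegree_mono
  have hfew : G.degree u * G.maxDegree < k :=
    calc G.degree u * G.maxDegree ≤ 1 * G.maxDegree := Nat.mul_le_mul_right _ hu
      _ < k := by omega
  obtain ⟨a, ha⟩ := G.exists_color_ne_of_dist2Adj c hfew
  exact hG ⟨_, G.isDist2Coloring_of_induce_compl_singleton hu hc ha⟩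
end

section
/- Let G be a graph with two adjacent vertices u, v both of degree 3, where N(v) = {u, v₁, v₂}. Let G' = (G − v) + uv₁ + uv₂. If G' admits a distance-2 coloring with k colors and k ≥ 2Δ(G) + 4, then G admits a distance-2 coloring with k colors. -/
/-- Add the edge `ab` to a graph (no effect if already present or `a = b`). -/
def addEdge {W : Type*} (H : SimpleGraph W) (a b : W) : SimpleGraph W :=
  H ⊔ SimpleGraph.fromEdgeSet {s(a, b)}

/-!
Only `v` needs a colour. Every vertex at distance at most two from `v` is a neighbour `x` of `v`
or a neighbour of such an `x` other than `v`, so at most `deg u + deg v₁ + deg v₂ ≤ 2Δ + 3 < k`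
colours are forbidden at `v`. The colouring of `G'` is admissible on `G - v`: two vertices joined
through `v` in `G` both lie in `{u, v₁, v₂}`, and in `G'` these are adjacent or joined through `u`.
-/

open Finset

theorem Finset.sum_insert_le {α M : Type*} [DecidableEq α] [AddCommMonoid M] [PartialOrder M]
    [CanonicallyOrderedAdd M] (a : α) (s : Finset α) (f : α → M) :
    ∑ x ∈ insert a s, f x ≤ f a + ∑ x ∈ s, f x := by
  by_cases ha : a ∈ s
  · rw [insert_eq_of_mem ha]; exact le_add_self
  · rw [sum_insert ha]

namespace SimpleGraph

variable {V : Type*}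

-- `IsDist2Coloring G c` unfolds to `∀ x y, x ≠ y → G.WithinTwo x y → c x ≠ c y`.
def WithinTwo (G : SimpleGraph V) (x y : V) : Prop :=
  G.Adj x y ∨ ∃ z, G.Adj x z ∧ G.Adj z y

theorem WithinTwo.symm {G : SimpleGraph V} {x y : V} (h : G.WithinTwo x y) : G.WithinTwo y x := by
  rcases h with h | ⟨z, hxz, hzy⟩
  · exact Or.inl h.symm
  · exact Or.inr ⟨z, hzy.symm, hxz.symm⟩

theorem exists_isDist2Coloring_of_card_withinTwo_lt {k : ℕ} (G : SimpleGraph V) (v : V)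
    (c : {w : V | w ≠ v} → Fin k)
    (hc : ∀ x y : {w : V | w ≠ v}, x ≠ y → G.WithinTwo x y → c x ≠ c y)
    (S : Finset V) (hS : ∀ w, w ≠ v → G.WithinTwo v w → w ∈ S) (hSk : #S < k) :
    ∃ c' : V → Fin k, IsDist2Coloring G c' := by
  classical
  have hused : #((S.subtype (· ∈ {w : V | w ≠ v})).image c) < #(univ : Finset (Fin k)) := by
    calc _ ≤ #(S.subtype (· ∈ {w : V | w ≠ v})) := card_image_le
      _ ≤ #S := by rw [card_subtype]; exact card_filter_le _ _
      _ < _ := by simpa using hSk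
  obtain ⟨a, -, ha⟩ := exists_mem_notMem_of_card_lt_card hused
  have hfree : ∀ w (hw : w ≠ v), G.WithinTwo v w → c ⟨w, hw⟩ ≠ a := fun w hw hvw hca =>
    ha (mem_image.mpr ⟨⟨w, hw⟩, mem_subtype.mpr (hS w hw hvw), hca⟩)
  refine ⟨fun w => if hw : w = v then a else c ⟨w, hw⟩, fun x y hxy hnear => ?_⟩
  by_cases hx : x = v
  · subst hx
    have hy : y ≠ x := Ne.symm hxy
    simpa [hy] using (hfree y hy hnear).symm
  by_cases hy : y = v
  · subst hy
    simpa [hx] using hfree x hx (WithinTwo.symm hnear)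
  simpa [hx, hy] using hc ⟨x, hx⟩ ⟨y, hy⟩ (by simpa [Subtype.ext_iff] using hxy) hnear

theorem withinTwo_of_induce_le_of_hub {G : SimpleGraph V} {v : V}
    {H : SimpleGraph {w : V | w ≠ v}} (hle : G.induce {w | w ≠ v} ≤ H) (u : {w : V | w ≠ v})
    (hu : ∀ w : {w : V | w ≠ v}, G.Adj v w → w ≠ u → H.Adj u w)
    {x y : {w : V | w ≠ v}} (hxy : x ≠ y) (h : G.WithinTwo x y) : H.WithinTwo x y := by
  rcases h with h | ⟨z, hxz, hzy⟩
  · exact Or.inl (hle h)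
  by_cases hz : z = v
  · subst hz
    by_cases hx : x = u
    · subst hx; exact Or.inl (hu y hzy (Ne.symm hxy))
    by_cases hy : y = u
    · subst hy; exact Or.inl (hu x hxz.symm hx).symm
    · exact Or.inr ⟨u, (hu x hxz.symm hx).symm, hu y hzy hy⟩
  · exact Or.inr ⟨⟨z, hz⟩, hle hxz, hle hzy⟩

variable [Fintype V] [DecidableEq V] (G : SimpleGraph V) [DecidableRel G.Adj]

theorem card_insert_neighborFinset_erase_le {v x : V} (h : G.Adj v x) :
    #(insert x ((G.neighborFinset x).erase v)) ≤ G.degree x := by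
  have hv : v ∈ G.neighborFinset x := by simpa using h.symm
  calc _ ≤ #((G.neighborFinset x).erase v) + 1 := card_insert_le _ _
    _ = G.degree x := by rw [card_erase_add_one hv, card_neighborFinset_eq_degree]

theorem mem_biUnion_of_withinTwo {v w : V} (hw : w ≠ v) (h : G.WithinTwo v w) :
    w ∈ (G.neighborFinset v).biUnion fun x => insert x ((G.neighborFinset x).erase v) := by
  simp only [mem_biUnion, mem_insert, mem_erase, mem_neighborFinset]
  rcases h with h | ⟨x, hvx, hxw⟩
  · exact ⟨w, h, Or.inl rfl⟩
  · exact ⟨x, hvx, Or.inr ⟨hw, hxw⟩⟩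

theorem exists_withinTwo_finset_card_le_sum_degree (v : V) :
    ∃ S : Finset V, (∀ w, w ≠ v → G.WithinTwo v w → w ∈ S) ∧
      #S ≤ ∑ x ∈ G.neighborFinset v, G.degree x := by
  refine ⟨_, fun w hw h => G.mem_biUnion_of_withinTwo hw h, card_biUnion_le.trans ?_⟩
  exact sum_le_sum fun x hx =>
    G.card_insert_neighborFinset_erase_le ((G.mem_neighborFinset v x).mp hx)

end SimpleGraph

open SimpleGraph

theorem stmt8_general {V : Type*} [Fintype V] [DecidableEq V] (G : SimpleGraph V)
    [DecidableRel G.Adj] (u v v₁ v₂ : V) (k : ℕ)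
    (hadj : G.Adj v u) (hdegu : G.degree u = 3)
    (h1 : G.Adj v v₁) (h2 : G.Adj v v₂)
    (hN : G.neighborSet v = {u, v₁, v₂})
    (hk : 2 * G.maxDegree + 4 ≤ k)
    (hcol : ∃ c : {w : V | w ≠ v} → Fin k,
      IsDist2Coloring
        (addEdge (addEdge (G.induce {w | w ≠ v}) ⟨u, hadj.ne'⟩ ⟨v₁, h1.ne'⟩)
          ⟨u, hadj.ne'⟩ ⟨v₂, h2.ne'⟩) c) :
    ∃ c : V → Fin k, IsDist2Coloring G c := by
  obtain ⟨c, hc⟩ := hcol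
  obtain ⟨S, hS, hScard⟩ := G.exists_withinTwo_finset_card_le_sum_degree v
  have hNv : G.neighborFinset v = {u, v₁, v₂} := by simp [neighborFinset_def, hN]
  have hdeg : ∑ x ∈ G.neighborFinset v, G.degree x ≤ 2 * G.maxDegree + 3 := by
    have hu := sum_insert_le u {v₁, v₂} fun x => G.degree x
    have hv := sum_insert_le v₁ {v₂} fun x => G.degree x
    have := G.degree_le_maxDegree v₁
    have := G.degree_le_maxDegree v₂
    rw [hNv]
    simp only [sum_singleton] at hu hv
    omega
  refine G.exists_isDist2Coloring_of_card_withinTwo_lt v c (fun x y hxy h => hc x y hxy ?_) S hS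
    (by omega)
  refine withinTwo_of_induce_le_of_hub (le_sup_left.trans le_sup_left) ⟨u, hadj.ne'⟩
    (fun ⟨w, _⟩ hvw hne => ?_) hxy h
  have hwu : w ≠ u := fun h => hne (Subtype.ext h)
  have hw : w = v₁ ∨ w = v₂ := by simpa [← mem_neighborSet, hN, hwu] using hvw
  rcases hw with rfl | rfl
  · exact Or.inl (Or.inr (by simp [hwu.symm]))
  · exact Or.inr (by simp [hwu.symm])

/-- Let `u, v` be adjacent 3-vertices with `N(v) = {u, v₁, v₂}` and let
`G' = (G - v) + uv₁ + uv₂`. If `G'` admits a distance-2 coloring with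
`k ≥ 2Δ(G) + 4` colors, then so does `G`. -/
theorem stmt8 {V : Type*} [Fintype V] [DecidableEq V] (G : SimpleGraph V)
    [DecidableRel G.Adj] (u v v₁ v₂ : V) (k : ℕ)
    (hadj : G.Adj v u) (hdegu : G.degree u = 3) (hdegv : G.degree v = 3)
    (h1 : G.Adj v v₁) (h2 : G.Adj v v₂)
    (hN : G.neighborSet v = {u, v₁, v₂})
    (hk : 2 * G.maxDegree + 4 ≤ k)
    (hcol : ∃ c : {w : V | w ≠ v} → Fin k,
      IsDist2Coloring
        (addEdge (addEdge (G.induce {w | w ≠ v}) ⟨u, hadj.ne'⟩ ⟨v₁, h1.ne'⟩)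
          ⟨u, hadj.ne'⟩ ⟨v₂, h2.ne'⟩) c) :
    ∃ c : V → Fin k, IsDist2Coloring G c :=
  stmt8_general G u v v₁ v₂ k hadj hdegu h1 h2 hN hk hcol
end

section
/- Let G be a graph with maximum degree Δ = Δ(G) ≥ 6, and let v be a vertex of degree 5 whose five neighbors form a cycle v₁v₂v₃v₄v₅ (so v together with its neighbors forms a wheel W₅). If two distinct neighbors v_i, v_j have degree at most 6 in G, then the number of vertices at distance at most 2 from v (excluding v) is at most 3Δ(G) + 2. -/
/-- Let `v` be a 5-vertex whose five neighbors `n 0, …, n 4` form a 5-cycle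
(so `v` and its neighbors form a wheel `W₅`). If two distinct neighbors
`n i, n j` have degree at most 6 and `Δ(G) ≥ 6`, then the number of vertices
at distance at most 2 from `v`, excluding `v`, is at most `3Δ(G) + 2`. -/
theorem stmt10 {V : Type*} [Fintype V] [DecidableEq V] (G : SimpleGraph V)
    [DecidableRel G.Adj] (v : V) (n : Fin 5 → V)
    (hinj : Function.Injective n)
    (hN : G.neighborSet v = Set.range n)
    (hdeg : G.degree v = 5)
    (hcyc : ∀ i : Fin 5, G.Adj (n i) (n (i + 1)))
    (i j : Fin 5) (hij : i ≠ j)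
    (hi : G.degree (n i) ≤ 6) (hj : G.degree (n j) ≤ 6)
    (hΔ : 6 ≤ G.maxDegree) :
    ({u : V | u ≠ v ∧ (G.Adj v u ∨ ∃ w, G.Adj v w ∧ G.Adj w u)}).ncard
      ≤ 3 * G.maxDegree + 2 := by
  classical
  have hadj : ∀ k : Fin 5, G.Adj v (n k) := by
    intro k
    have : n k ∈ G.neighborSet v := hN ▸ Set.mem_range_self k
    exact this
  set B : Finset V := Finset.univ.image n with hB
  have hBcard : B.card = 5 := by
    rw [hB, Finset.card_image_of_injective _ hinj, Finset.card_univ, Fintype.card_fin]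
  set f : Fin 5 → Finset V := fun k => G.neighborFinset (n k) \ insert v B with hf
  have hfcard : ∀ k, (f k).card ≤ G.degree (n k) - 3 := by
    intro k
    have hCsub : ({v, n (k-1), n (k+1)} : Finset V) ⊆ G.neighborFinset (n k) := by
      intro x hx
      simp only [Finset.mem_insert, Finset.mem_singleton] at hx
      rcases hx with rfl | rfl | rfl
      · exact (SimpleGraph.mem_neighborFinset _ _ _).2 (hadj k).symm
      · have hk : k - 1 + 1 = k := by exact sub_add_cancel k 1
        have h := hcyc (k-1)
        rw [hk] at h
        exact (SimpleGraph.mem_neighborFinset _ _ _).2 h.symm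
      · exact (SimpleGraph.mem_neighborFinset _ _ _).2 (hcyc k)
    have hne : (k : Fin 5) - 1 ≠ k + 1 := by
      intro h
      rw [sub_eq_add_neg] at h
      have h2 : (-1 : Fin 5) = 1 := add_left_cancel h
      exact absurd h2 (by decide)
    have hCcard : ({v, n (k-1), n (k+1)} : Finset V).card = 3 := by
      rw [Finset.card_insert_of_notMem, Finset.card_insert_of_notMem,
        Finset.card_singleton]
      · simp only [Finset.mem_singleton]
        exact fun h => hne (hinj h)
      · simp only [Finset.mem_insert, Finset.mem_singleton]
        push_neg
        exact ⟨(hadj _).ne, (hadj _).ne⟩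
    have hsub : f k ⊆ G.neighborFinset (n k) \ {v, n (k-1), n (k+1)} := by
      intro x hx
      rw [hf] at hx
      simp only [Finset.mem_sdiff] at hx ⊢
      refine ⟨hx.1, ?_⟩
      intro hxC
      apply hx.2
      simp only [Finset.mem_insert, Finset.mem_singleton] at hxC
      rcases hxC with rfl | rfl | rfl
      · exact Finset.mem_insert_self _ _
      · exact Finset.mem_insert_of_mem (Finset.mem_image_of_mem n (Finset.mem_univ _))
      · exact Finset.mem_insert_of_mem (Finset.mem_image_of_mem n (Finset.mem_univ _))
    calc (f k).card ≤ (G.neighborFinset (n k) \ {v, n (k-1), n (k+1)}).card :=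
          Finset.card_le_card hsub
      _ = G.degree (n k) - 3 := by
          rw [Finset.card_sdiff_of_subset hCsub, hCcard, SimpleGraph.card_neighborFinset_eq_degree]
  -- the set is covered by B ∪ ⋃ f k
  have hsubS : {u : V | u ≠ v ∧ (G.Adj v u ∨ ∃ w, G.Adj v w ∧ G.Adj w u)}
      ⊆ ↑(B ∪ Finset.univ.biUnion f) := by
    rintro u ⟨hune, hcase⟩
    rw [Finset.coe_union, Set.mem_union]
    rcases hcase with hvu | ⟨w, hvw, hwu⟩
    · left
      have : u ∈ G.neighborSet v := hvu
      rw [hN] at this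
      obtain ⟨k, rfl⟩ := this
      exact_mod_cast Finset.mem_image_of_mem n (Finset.mem_univ k)
    · have hw : w ∈ G.neighborSet v := hvw
      rw [hN] at hw
      obtain ⟨k, rfl⟩ := hw
      by_cases hB' : u ∈ B
      · exact Or.inl hB'
      · right
        rw [Finset.coe_biUnion]
        refine Set.mem_biUnion (by simp : k ∈ (↑(Finset.univ : Finset (Fin 5)) : Set (Fin 5))) ?_
        rw [hf]
        simp only [Finset.coe_sdiff, Set.mem_diff]
        refine ⟨by simp [SimpleGraph.mem_neighborFinset]; exact hwu, ?_⟩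
        intro hmem
        rw [Finset.coe_insert, Set.mem_insert_iff] at hmem
        rcases hmem with rfl | hmem
        · exact hune rfl
        · exact hB' (by exact_mod_cast hmem)
  have h1 : ({u : V | u ≠ v ∧ (G.Adj v u ∨ ∃ w, G.Adj v w ∧ G.Adj w u)}).ncard
      ≤ (B ∪ Finset.univ.biUnion f).card := by
    rw [← Set.ncard_coe_finset]
    exact Set.ncard_le_ncard hsubS (Finset.finite_toSet _)
  -- bound the card of the union
  have h2 : (B ∪ Finset.univ.biUnion f).card ≤ 5 + ∑ k : Fin 5, (f k).card := by
    calc (B ∪ Finset.univ.biUnion f).card ≤ B.card + (Finset.univ.biUnion f).card :=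
          Finset.card_union_le _ _
      _ ≤ 5 + ∑ k : Fin 5, (f k).card := by
          rw [hBcard]; exact Nat.add_le_add_left (Finset.card_biUnion_le) 5
  -- bound the sum
  have hb : ∀ k : Fin 5, (f k).card ≤ if k = i ∨ k = j then 3 else G.maxDegree - 3 := by
    intro k
    by_cases hk : k = i ∨ k = j
    · rw [if_pos hk]
      rcases hk with rfl | rfl
      · exact le_trans (hfcard k) (by omega)
      · exact le_trans (hfcard k) (by omega)
    · rw [if_neg hk]
      have := G.degree_le_maxDegree (n k)
      exact le_trans (hfcard k) (by omega)
  have h3 : ∑ k : Fin 5, (f k).card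
      ≤ ∑ k : Fin 5, (if k = i ∨ k = j then 3 else G.maxDegree - 3) :=
    Finset.sum_le_sum fun k _ => hb k
  have h4 : ∑ k : Fin 5, (if k = i ∨ k = j then 3 else G.maxDegree - 3)
      = 2 * 3 + 3 * (G.maxDegree - 3) := by
    rw [Finset.sum_ite]
    have hfil : Finset.univ.filter (fun k : Fin 5 => k = i ∨ k = j) = {i, j} := by
      ext k
      simp [Finset.mem_insert, Finset.mem_singleton]
    have hcard1 : (Finset.univ.filter (fun k : Fin 5 => k = i ∨ k = j)).card = 2 := by
      rw [hfil, Finset.card_insert_of_notMem (by simpa using hij), Finset.card_singleton]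
    have hcard2 : (Finset.univ.filter (fun k : Fin 5 => ¬(k = i ∨ k = j))).card = 3 := by
      have := Finset.card_filter_add_card_filter_not
        (s := (Finset.univ : Finset (Fin 5))) (p := fun k : Fin 5 => k = i ∨ k = j)
      simp only [Finset.card_univ, Fintype.card_fin] at this
      omega
    rw [Finset.sum_const, Finset.sum_const, hcard1, hcard2, smul_eq_mul, smul_eq_mul]
  omega
end
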